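/- arXiv:2212.14489 — 2 statements merged into one kernel-verified Lean document; each statement's English description precedes it below -/
import Mathlib

section
/- Let B > 0, let θ : ℝ → ℝ be continuous, nonnegative, and even with θ(r) = 0 whenever |r| ≥ B, and let f₀ = (1/(2B)) 𝟙_{(−B,B)} be the uniform density on (−B,B). Define ν_θ(a) = μ_θ[f₀; a] for a ∈ ℝ. Then ν_θ is differentiable at every a ∈ (0,B), and its derivative is ν_θ′(a) = (1/(2B²)) ∫₀^B θ(y) G(a,y) dy, where G is the piecewise indicator kernel on (0,B) × ℝ. -/
open MeasureTheory Set

/-- The measurement bracket `Ψ_a(x₁,x₂) = 2·𝟙[(x₁+x₂)/2 ≤ a] − 𝟙[x₁ ≤ a] − 𝟙[x₂ ≤ a]`. -/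
noncomputable def Psi (a x₁ x₂ : ℝ) : ℝ :=
  2 * (if (x₁ + x₂) / 2 ≤ a then (1 : ℝ) else 0)
    - (if x₁ ≤ a then (1 : ℝ) else 0) - (if x₂ ≤ a then (1 : ℝ) else 0)

/-- The initial measurement rate `μ_θ[f₀; a]`. -/
noncomputable def mu (θ f₀ : ℝ → ℝ) (a : ℝ) : ℝ :=
  ∫ p : ℝ × ℝ, θ (p.1 - p.2) * f₀ p.1 * f₀ p.2 * Psi a p.1 p.2

/-- The uniform density on `(-B, B)`. -/
noncomputable def uniformDensity (B x : ℝ) : ℝ :=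
  (1 / (2 * B)) * (Set.Ioo (-B) B).indicator 1 x

/-- The piecewise indicator kernel `G` on `(0,B) × ℝ`. -/
noncomputable def Gker (B a y : ℝ) : ℝ :=
  if a ≤ B / 2 then (Set.Ioo (B - a) B).indicator 1 y
  else (Set.Ioo (B - a) (2 * (B - a))).indicator 1 y
    - (Set.Ioo (2 * (B - a)) B).indicator 1 y

/-!
Write `Θ = prim θ` and `Θ₂ = prim Θ` for the primitives vanishing at `0`. By Fubini,
`μ_θ[f₀; a]` is `(2B)⁻²` times the integral of `θ (x - y) * Ψ_a x y` over the square `(-B, B)²`.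
Each indicator in `Ψ_a` truncates the inner `y`-integral, which becomes a difference of values
of `Θ`; the outer `x`-integral then becomes a combination of values of `Θ₂`. As `θ` is even,
`Θ` is odd and `Θ₂` is even, and for `0 ≤ a ≤ B` everything collapses to
`(Θ₂ (2B) - Θ₂ (2(B - a)) - Θ₂ (B + a) + Θ₂ (B - a)) / (2B²)`, whose derivative is
`(2 Θ (2(B - a)) - Θ (B + a) - Θ (B - a)) / (2B²)`. Since `θ` vanishes on `[B, ∞)`, `Θ` is
constant there, and this is exactly `(2B²)⁻¹ ∫₀^B θ y G(a, y) dy`.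
-/

noncomputable def prim (θ : ℝ → ℝ) (t : ℝ) : ℝ := ∫ y in (0 : ℝ)..t, θ y

section prim

variable {θ : ℝ → ℝ}

theorem continuous_prim (hθ : Continuous θ) : Continuous (prim θ) :=
  intervalIntegral.continuous_primitive (fun a b => hθ.intervalIntegrable a b) 0

theorem hasDerivAt_prim (hθ : Continuous θ) (t : ℝ) : HasDerivAt (prim θ) (θ t) t :=
  (hθ.integral_hasStrictDerivAt 0 t).hasDerivAt

theorem integral_eq_prim_sub (hθ : Continuous θ) (u v : ℝ) :
    ∫ y in u..v, θ y = prim θ v - prim θ u :=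
  (intervalIntegral.integral_interval_sub_left (hθ.intervalIntegrable 0 v)
    (hθ.intervalIntegrable 0 u)).symm

theorem prim_zero : prim θ 0 = 0 := intervalIntegral.integral_same

theorem prim_neg_of_even (hθ : ∀ r, θ (-r) = θ r) (t : ℝ) : prim θ (-t) = -prim θ t := by
  have h := intervalIntegral.integral_comp_neg (a := 0) (b := t) θ
  simp only [hθ, neg_zero] at h
  rw [prim, intervalIntegral.integral_symm, ← h, prim]

theorem prim_neg_of_odd (hθ : ∀ r, θ (-r) = -θ r) (t : ℝ) : prim θ (-t) = prim θ t := by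
  have h := intervalIntegral.integral_comp_neg (a := 0) (b := t) θ
  simp only [hθ, intervalIntegral.integral_neg, neg_zero] at h
  rw [prim, intervalIntegral.integral_symm, ← h, neg_neg, prim]

theorem prim_eq_of_le (hθ : Continuous θ) {B t : ℝ} (hθB : ∀ r, B ≤ r → θ r = 0)
    (ht : B ≤ t) : prim θ t = prim θ B := by
  have h : ∫ y in B..t, θ y = 0 := by
    rw [intervalIntegral.integral_congr (g := fun _ => 0) fun r hr => hθB r ?_,
      intervalIntegral.integral_zero]
    exact (Set.uIcc_of_le ht ▸ hr).1
  rw [integral_eq_prim_sub hθ] at h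
  linarith

end prim

section truncation

variable {h : ℝ → ℝ} {L R c d : ℝ}

theorem mul_ite_le_eq_indicator (h : ℝ → ℝ) (c : ℝ) :
    (fun x => h x * (if x ≤ c then (1 : ℝ) else 0)) = (Iic c).indicator h := by
  ext x; by_cases hx : x ≤ c <;> simp [hx]

theorem mul_indicator_one_eq_indicator (h : ℝ → ℝ) (s : Set ℝ) :
    (fun x => h x * s.indicator 1 x) = s.indicator h := by
  ext x; by_cases hx : x ∈ s <;> simp [hx]

theorem IntervalIntegrable.indicator {s : Set ℝ} (hh : IntervalIntegrable h volume L R)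
    (hs : MeasurableSet s) : IntervalIntegrable (s.indicator h) volume L R :=
  ⟨hh.1.indicator hs, hh.2.indicator hs⟩

theorem intervalIntegral_mul_ite_le (hLR : L ≤ R) (hLc : L ≤ c) :
    ∫ x in L..R, h x * (if x ≤ c then (1 : ℝ) else 0) = ∫ x in L..min R c, h x := by
  rw [mul_ite_le_eq_indicator, intervalIntegral.integral_of_le hLR,
    integral_indicator measurableSet_Iic, Measure.restrict_restrict measurableSet_Iic,
    inter_comm, Ioc_inter_Iic, intervalIntegral.integral_of_le (le_min hLR hLc)]

theorem intervalIntegral_mul_indicator_Ioo (hLc : L ≤ c) (hcd : c ≤ d) (hdR : d ≤ R) :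
    ∫ x in L..R, h x * (Ioo c d).indicator 1 x = ∫ x in c..d, h x := by
  rw [mul_indicator_one_eq_indicator, intervalIntegral.integral_of_le (hLc.trans (hcd.trans hdR)),
    integral_indicator measurableSet_Ioo, Measure.restrict_restrict measurableSet_Ioo,
    inter_eq_self_of_subset_left (show Ioo c d ⊆ Ioc L R from
      fun x hx => ⟨hLc.trans_lt hx.1, hx.2.le.trans hdR⟩),
    intervalIntegral.integral_of_le hcd, integral_Ioc_eq_integral_Ioo]

end truncation

section innerIntegral

variable {θ : ℝ → ℝ} {B a c : ℝ}

theorem Psi_eq (a x y : ℝ) :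
    Psi a x y = 2 * (if y ≤ 2 * a - x then (1 : ℝ) else 0)
      - (if x ≤ a then (1 : ℝ) else 0) - (if y ≤ a then (1 : ℝ) else 0) := by
  have h : (x + y) / 2 ≤ a ↔ y ≤ 2 * a - x := by constructor <;> intro <;> linarith
  simp only [Psi, h]

theorem abs_Psi_le_two (a x y : ℝ) : |Psi a x y| ≤ 2 := by
  unfold Psi; split_ifs <;> norm_num

theorem measurable_Psi (a : ℝ) : Measurable fun p : ℝ × ℝ => Psi a p.1 p.2 := by
  have hind : ∀ {f : ℝ × ℝ → ℝ}, Measurable f →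
      Measurable fun p => if f p ≤ a then (1 : ℝ) else 0 := fun hf =>
    Measurable.ite (measurableSet_le hf measurable_const) measurable_const measurable_const
  exact (((hind (by fun_prop)).const_mul 2).sub (hind measurable_fst)).sub (hind measurable_snd)

theorem integral_comp_sub_mul_ite_le (hθ : Continuous θ) (hB : 0 ≤ B) (hc : -B ≤ c) (x : ℝ) :
    ∫ y in (-B)..B, θ (x - y) * (if y ≤ c then (1 : ℝ) else 0)
      = prim θ (x + B) - prim θ (x - min B c) := by
  rw [intervalIntegral_mul_ite_le (h := fun y => θ (x - y)) (by linarith) hc,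
    intervalIntegral.integral_comp_sub_left, integral_eq_prim_sub hθ, sub_neg_eq_add]

theorem integral_comp_sub_mul_Psi (hθ : Continuous θ) (ha : a ∈ Icc 0 B) {x : ℝ} (hx : x ≤ B) :
    ∫ y in (-B)..B, θ (x - y) * Psi a x y
      = 2 * (prim θ (x + B) - prim θ (x - min B (2 * a - x)))
        - (prim θ (x + B) - prim θ (x - B)) * (if x ≤ a then (1 : ℝ) else 0)
        - (prim θ (x + B) - prim θ (x - a)) := by
  obtain ⟨ha0, haB⟩ := ha
  have hB : 0 ≤ B := ha0.trans haB
  have hint : IntervalIntegrable (fun y => θ (x - y)) volume (-B) B :=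
    (by fun_prop : Continuous fun y => θ (x - y)).intervalIntegrable _ _
  have hint_le : ∀ c, IntervalIntegrable (fun y => θ (x - y) * (if y ≤ c then (1 : ℝ) else 0))
      volume (-B) B := fun c => by
    rw [mul_ite_le_eq_indicator]; exact hint.indicator measurableSet_Iic
  have hsplit : (fun y => θ (x - y) * Psi a x y) = fun y =>
      2 * (θ (x - y) * (if y ≤ 2 * a - x then (1 : ℝ) else 0))
        - θ (x - y) * (if x ≤ a then (1 : ℝ) else 0)
        - θ (x - y) * (if y ≤ a then (1 : ℝ) else 0) := by
    ext y; rw [Psi_eq]; ring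
  rw [hsplit, intervalIntegral.integral_sub
      (((hint_le _).const_mul 2).sub (hint.mul_const _)) (hint_le _),
    intervalIntegral.integral_sub ((hint_le _).const_mul 2) (hint.mul_const _),
    intervalIntegral.integral_const_mul, intervalIntegral.integral_mul_const,
    integral_comp_sub_mul_ite_le hθ hB (by linarith) x,
    integral_comp_sub_mul_ite_le hθ hB (by linarith) x, min_eq_right haB,
    intervalIntegral.integral_comp_sub_left, integral_eq_prim_sub hθ, sub_neg_eq_add]

end innerIntegral

section doubleIntegral

variable {θ P : ℝ → ℝ} {B a : ℝ}

theorem integral_comp_sub_min (hP : Continuous P) (hQ : ∀ t, prim P (-t) = prim P t)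
    (ha : a ∈ Icc 0 B) :
    ∫ x in (-B)..B, P (x - min B (2 * a - x)) = prim P (2 * (B - a)) - prim P (2 * B) := by
  obtain ⟨ha0, haB⟩ := ha
  have hcont : Continuous fun x => P (x - min B (2 * a - x)) := by fun_prop
  have hleft : ∫ x in (-B)..(2 * a - B), P (x - min B (2 * a - x))
      = ∫ x in (-B)..(2 * a - B), P (x - B) :=
    intervalIntegral.integral_congr fun x hx => by
      rw [uIcc_of_le (by linarith)] at hx
      rw [min_eq_left (by linarith [hx.2])]
  have hright : ∫ x in (2 * a - B)..B, P (x - min B (2 * a - x))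
      = ∫ x in (2 * a - B)..B, P (2 * x - 2 * a) :=
    intervalIntegral.integral_congr fun x hx => by
      rw [uIcc_of_le (by linarith)] at hx
      rw [min_eq_right (by linarith [hx.1])]
      ring_nf
  rw [← intervalIntegral.integral_add_adjacent_intervals (b := 2 * a - B)
      (hcont.intervalIntegrable _ _) (hcont.intervalIntegrable _ _), hleft, hright,
    intervalIntegral.integral_comp_sub_right, intervalIntegral.integral_comp_mul_sub _ two_ne_zero,
    integral_eq_prim_sub hP, integral_eq_prim_sub hP,
    show 2 * a - B - B = -(2 * (B - a)) by ring, show -B - B = -(2 * B) by ring,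
    show 2 * (2 * a - B) - 2 * a = -(2 * B - 2 * a) by ring, hQ, hQ, hQ, sub_self, smul_zero,
    add_zero]

theorem integral_integral_comp_sub_mul_Psi (hθ : Continuous θ) (hθe : ∀ r, θ (-r) = θ r)
    (ha : a ∈ Icc 0 B) :
    ∫ x in (-B)..B, ∫ y in (-B)..B, θ (x - y) * Psi a x y
      = 2 * (prim (prim θ) (2 * B) - prim (prim θ) (2 * (B - a)) - prim (prim θ) (B + a)
        + prim (prim θ) (B - a)) := by
  have hB : -B ≤ B := by linarith [ha.1, ha.2]
  rw [intervalIntegral.integral_congr fun x hx =>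
    integral_comp_sub_mul_Psi hθ ha (uIcc_of_le hB ▸ hx).2]
  have hP : Continuous (prim θ) := continuous_prim hθ
  have hQ : ∀ t, prim (prim θ) (-t) = prim (prim θ) t := prim_neg_of_odd (prim_neg_of_even hθe)
  generalize prim θ = P at hP hQ ⊢
  have hi : ∀ {f : ℝ → ℝ}, Continuous f → IntervalIntegrable f volume (-B) B :=
    fun hf => hf.intervalIntegrable _ _
  have hshift : ∀ s, Continuous fun x => P (x + s) := fun s => by fun_prop
  have htrunc : ∫ x in (-B)..B, (P (x + B) - P (x - B)) * (if x ≤ a then (1 : ℝ) else 0)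
      = ∫ x in (-B)..a, (P (x + B) - P (x - B)) := by
    rw [intervalIntegral_mul_ite_le hB (by linarith [ha.1]), min_eq_right ha.2]
  have hiA : IntervalIntegrable (fun x => P (x + B) - P (x - min B (2 * a - x))) volume (-B) B :=
    hi (by fun_prop)
  have hiT : IntervalIntegrable (fun x => (P (x + B) - P (x - B)) *
      (if x ≤ a then (1 : ℝ) else 0)) volume (-B) B := by
    rw [mul_ite_le_eq_indicator]; exact (hi (by fun_prop)).indicator measurableSet_Iic
  rw [intervalIntegral.integral_sub ((hiA.const_mul 2).sub hiT) (hi (by fun_prop)),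
    intervalIntegral.integral_sub (hiA.const_mul 2) hiT, intervalIntegral.integral_const_mul,
    intervalIntegral.integral_sub (hi (hshift B)) (hi (by fun_prop)), htrunc,
    intervalIntegral.integral_sub ((hshift B).intervalIntegrable _ _)
      ((by fun_prop : Continuous fun x => P (x - B)).intervalIntegrable _ _),
    intervalIntegral.integral_sub (hi (hshift B)) (hi (by fun_prop)),
    integral_comp_sub_min hP hQ ha, intervalIntegral.integral_comp_add_right,
    intervalIntegral.integral_comp_add_right, intervalIntegral.integral_comp_sub_right,
    intervalIntegral.integral_comp_sub_right]
  simp only [integral_eq_prim_sub hP]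
  have h0 : prim P (-B + B) = 0 := by rw [neg_add_cancel, prim_zero]
  have h1 : prim P (a - B) = prim P (B - a) := by rw [← neg_sub, hQ]
  have h2 : prim P (-B - B) = prim P (2 * B) := by rw [← hQ]; ring_nf
  have h3 : prim P (-B - a) = prim P (B + a) := by rw [← hQ]; ring_nf
  rw [h0, h1, h2, h3]
  ring_nf

end doubleIntegral

noncomputable def uniformRate (θ : ℝ → ℝ) (B a : ℝ) : ℝ :=
  1 / (2 * B ^ 2) * (prim (prim θ) (2 * B) - prim (prim θ) (2 * (B - a))
    - prim (prim θ) (B + a) + prim (prim θ) (B - a))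

section uniform

variable {θ : ℝ → ℝ} {B a : ℝ}

theorem integral_uniformDensity_mul (hB : 0 ≤ B) (g : ℝ → ℝ) :
    ∫ y, uniformDensity B y * g y = 1 / (2 * B) * ∫ y in (-B)..B, g y := by
  have h : (fun y => uniformDensity B y * g y)
      = fun y => 1 / (2 * B) * (Ioo (-B) B).indicator g y := by
    ext y; by_cases hy : y ∈ Ioo (-B) B <;> simp [uniformDensity, hy]
  rw [h, integral_const_mul, integral_indicator measurableSet_Ioo,
    ← integral_Ioc_eq_integral_Ioo, ← intervalIntegral.integral_of_le (by linarith)]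

theorem integrable_mu_uniformDensity (hθ : Continuous θ) (hB : 0 < B) (a : ℝ) :
    Integrable fun p : ℝ × ℝ =>
      θ (p.1 - p.2) * uniformDensity B p.1 * uniformDensity B p.2 * Psi a p.1 p.2 := by
  obtain ⟨C, hC⟩ := (isCompact_Icc (a := -(2 * B)) (b := 2 * B)).exists_bound_of_continuousOn
    hθ.continuousOn
  have hf : Measurable (uniformDensity B) :=
    measurable_const.mul (measurable_one.indicator measurableSet_Ioo)
  refine (Measure.integrableOn_of_bounded (s := Ioo (-B) B ×ˢ Ioo (-B) B)
    (M := C * (1 / (2 * B)) * (1 / (2 * B)) * 2) ?_ ?_ ?_).integrable_of_forall_notMem_eq_zero ?_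
  · rw [Measure.volume_eq_prod, Measure.prod_prod]
    exact ENNReal.mul_ne_top measure_Ioo_lt_top.ne measure_Ioo_lt_top.ne
  · exact ((((hθ.measurable.comp (measurable_fst.sub measurable_snd)).mul
      (hf.comp measurable_fst)).mul (hf.comp measurable_snd)).mul
      (measurable_Psi a)).aestronglyMeasurable
  · refine ae_restrict_of_forall_mem (measurableSet_Ioo.prod measurableSet_Ioo)
      fun p ⟨hx, hy⟩ => ?_
    have hθp : ‖θ (p.1 - p.2)‖ ≤ C :=
      hC _ ⟨by linarith [hx.1, hy.2], by linarith [hx.2, hy.1]⟩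
    simp only [uniformDensity, indicator_of_mem hx, indicator_of_mem hy, Pi.one_apply, mul_one,
      norm_mul, Real.norm_eq_abs, abs_of_pos (by positivity : 0 < 1 / (2 * B))]
    rw [Real.norm_eq_abs] at hθp
    gcongr
    · exact mul_nonneg (mul_nonneg ((abs_nonneg _).trans hθp) (by positivity)) (by positivity)
    · exact abs_Psi_le_two a _ _
  · intro p hp
    rcases not_and_or.1 (mem_prod.not.1 hp) with hx | hy
    · simp [uniformDensity, indicator_of_notMem hx]
    · simp [uniformDensity, indicator_of_notMem hy]

theorem mu_uniformDensity (hθ : Continuous θ) (hθe : ∀ r, θ (-r) = θ r) (hB : 0 < B)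
    (ha : a ∈ Icc 0 B) : mu θ (uniformDensity B) a = uniformRate θ B a := by
  have hinner : ∀ x, ∫ y, θ (x - y) * uniformDensity B x * uniformDensity B y * Psi a x y
      = uniformDensity B x * (1 / (2 * B) * ∫ y in (-B)..B, θ (x - y) * Psi a x y) := by
    intro x
    rw [← integral_uniformDensity_mul hB.le, ← integral_const_mul]
    congr 1; ext y; ring
  rw [mu, Measure.volume_eq_prod, integral_prod _ (integrable_mu_uniformDensity hθ hB a)]
  simp only [hinner]
  rw [integral_uniformDensity_mul hB.le, intervalIntegral.integral_const_mul,
    integral_integral_comp_sub_mul_Psi hθ hθe ha, uniformRate]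
  field_simp

theorem hasDerivAt_uniformRate (hθ : Continuous θ) (B a : ℝ) :
    HasDerivAt (uniformRate θ B)
      (1 / (2 * B ^ 2) * (2 * prim θ (2 * (B - a)) - prim θ (B + a) - prim θ (B - a))) a := by
  have hQ := hasDerivAt_prim (continuous_prim hθ)
  have h1 := (hQ (2 * (B - a))).comp a (((hasDerivAt_id a).const_sub B).const_mul 2)
  have h2 := (hQ (B + a)).comp a ((hasDerivAt_id a).const_add B)
  have h3 := (hQ (B - a)).comp a ((hasDerivAt_id a).const_sub B)
  exact (((((hasDerivAt_const a (prim (prim θ) (2 * B))).sub h1).sub h2).add h3).const_mul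
    (1 / (2 * B ^ 2))).congr_deriv (by ring)

theorem integral_mul_Gker (hθ : Continuous θ) (hθB : ∀ r, B ≤ r → θ r = 0)
    (ha : a ∈ Ioo 0 B) :
    ∫ y in (0 : ℝ)..B, θ y * Gker B a y
      = 2 * prim θ (2 * (B - a)) - prim θ (B + a) - prim θ (B - a) := by
  obtain ⟨ha0, haB⟩ := ha
  rw [prim_eq_of_le hθ hθB (by linarith : B ≤ B + a)]
  by_cases hcase : a ≤ B / 2
  · simp only [Gker, if_pos hcase]
    rw [intervalIntegral_mul_indicator_Ioo (by linarith) (by linarith) le_rfl,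
      integral_eq_prim_sub hθ, prim_eq_of_le hθ hθB (by linarith : B ≤ 2 * (B - a))]
    ring
  · have hi : ∀ s : Set ℝ, MeasurableSet s →
        IntervalIntegrable (fun y => θ y * s.indicator 1 y) volume 0 B := fun s hs => by
      rw [mul_indicator_one_eq_indicator]; exact (hθ.intervalIntegrable _ _).indicator hs
    simp only [Gker, if_neg hcase, mul_sub]
    rw [intervalIntegral.integral_sub (hi _ measurableSet_Ioo) (hi _ measurableSet_Ioo),
      intervalIntegral_mul_indicator_Ioo (by linarith) (by linarith) (by linarith),
      intervalIntegral_mul_indicator_Ioo (by linarith) (by linarith) le_rfl,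
      integral_eq_prim_sub hθ, integral_eq_prim_sub hθ]
    ring

end uniform

theorem stmt9_general (B : ℝ) (hB : 0 < B) (θ : ℝ → ℝ)
    (hθc : Continuous θ) (hθe : ∀ r, θ (-r) = θ r)
    (hθsupp : ∀ r : ℝ, B ≤ |r| → θ r = 0) :
    ∀ a ∈ Set.Ioo (0:ℝ) B,
      HasDerivAt (fun a' => mu θ (uniformDensity B) a')
        ((1 / (2 * B ^ 2)) * ∫ y in (0:ℝ)..B, θ y * Gker B a y) a := by
  intro a ha
  have hθB : ∀ r, B ≤ r → θ r = 0 := fun r hr => hθsupp r (hr.trans (le_abs_self r))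
  have hmu : (fun a' => mu θ (uniformDensity B) a') =ᶠ[nhds a] uniformRate θ B :=
    Filter.eventually_of_mem (Ioo_mem_nhds ha.1 ha.2) fun b hb =>
      mu_uniformDensity hθc hθe hB (Ioo_subset_Icc_self hb)
  rw [integral_mul_Gker hθc hθB ha]
  exact (hasDerivAt_uniformRate hθc B a).congr_of_eventuallyEq hmu

theorem stmt9 (B : ℝ) (hB : 0 < B) (θ : ℝ → ℝ)
    (hθc : Continuous θ) (hθnn : ∀ r, 0 ≤ θ r) (hθe : ∀ r, θ (-r) = θ r)
    (hθsupp : ∀ r : ℝ, B ≤ |r| → θ r = 0) :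
    ∀ a ∈ Set.Ioo (0:ℝ) B,
      HasDerivAt (fun a' => mu θ (uniformDensity B) a')
        ((1 / (2 * B ^ 2)) * ∫ y in (0:ℝ)..B, θ y * Gker B a y) a :=
  stmt9_general B hB θ hθc hθe hθsupp
end

section
/- Let T > 0, a ∈ ℝ, and C > 0. Let θ, θ̃ : ℝ → ℝ be bounded, measurable, and even. Let f, f̃ : ℝ × [0,T] → ℝ be jointly measurable with f nonnegative, ‖f(·,t)‖_{L¹(ℝ)} ≤ C and ‖f̃(·,t)‖_{L¹(ℝ)} ≤ C for all t ∈ [0,T], and let g : ℝ × [0,T] → ℝ be bounded and jointly measurable. Assume hypotheses (H1) and (H2) as follows: (H1) for every bounded measurable φ : ℝ → ℝ and every t ∈ [0,T], ∫_ℝ f̃(x,t) φ(x) dx = ∫₀^t ∫∫_{ℝ²} [ 2 f̃(x₁,s) f(x₂,s) θ(x₁−x₂) + f(x₁,s) f(x₂,s) θ̃(x₁−x₂) ] · [ 2 φ((x₁+x₂)/2) − φ(x₁) − φ(x₂) ] dx₁ dx₂ ds; (H2) for every x ∈ ℝ and t ∈ [0,T], g(x,t) = 𝟙[x ≤ a]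 + ∫_t^T ∫_ℝ 2 f(y,s) θ(x−y) [ 2 g((x+y)/2, s) − g(x,s) − g(y,s) ] dy ds. Then ∫_{−∞}^a f̃(x,T) dx = ∫₀^T ∫₀^∞ ∫_ℝ 2 θ̃(r) f(r+y, s) f(y, s) [ 2 g(y + r/2, s) − g(r+y, s) − g(y, s) ] dy dr ds. (This expresses the first-order change of the sub-threshold opinion fraction, under a perturbation θ̃ of the interaction kernel, as an integral linear in θ̃ over nonnegative opinion differences r; the integral against θ̃ gives the Fréchet derivative ∂_θ M_θ.) -/
/-!
Duality between the linearised forward equation (H1) and the adjoint backward equation (H2).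
By (H2), `𝟙_{(-∞,a]} = g(·,s) - ∫ₛᵀ 𝓛*_θ[g](·,u) du` for every `s`. Testing (H1) at time `T`
against this function and exchanging the two time integrals (over the triangle `s < u`), the
adjoint terms become `∫₀ᵀ ⟨f̃(·,u), 𝓛*_θ[g](·,u)⟩ du` by (H1) at time `u`; by Fubini this is
exactly the `θ`-part of `∫₀ᵀ ⟨𝓛_θ[f̃], g⟩`. Only the source term
`∫∫ f f θ̃ (2g((x+y)/2) - g(x) - g(y))` survives; its integrand is symmetric in `(x, y)` because
`θ̃` is even, so the substitution `x = y + r` folds it onto `r > 0`.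
-/

open MeasureTheory Set Function

theorem integrable_prod_of_abs_le_mul {α β : Type*} [MeasurableSpace α] [MeasurableSpace β]
    {μ : Measure α} {ν : Measure β} [SFinite ν] {v : α → ℝ} {w : β → ℝ} {F : α × β → ℝ} {c : ℝ}
    (hv : Integrable v μ) (hw : Integrable w ν)
    (hF : AEStronglyMeasurable F (μ.prod ν)) (hb : ∀ p, |F p| ≤ c * (|v p.1| * |w p.2|)) :
    Integrable F (μ.prod ν) :=
  ((hv.abs.mul_prod hw.abs).const_mul c).mono' hF (.of_forall hb)

theorem integral_abs_prod_le_mul {α β : Type*} [MeasurableSpace α] [MeasurableSpace β]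
    {μ : Measure α} {ν : Measure β} [SFinite μ] [SFinite ν] {v : α → ℝ} {w : β → ℝ}
    {F : α × β → ℝ} {c : ℝ} (hv : Integrable v μ) (hw : Integrable w ν)
    (hb : ∀ p, |F p| ≤ c * (|v p.1| * |w p.2|)) :
    ∫ p, |F p| ∂(μ.prod ν) ≤ c * ((∫ x, |v x| ∂μ) * ∫ y, |w y| ∂ν) := by
  rw [← integral_prod_mul (fun x => |v x|) (fun y => |w y|), ← integral_const_mul]
  exact integral_mono_of_nonneg (.of_forall fun _ => abs_nonneg _)
    ((hv.abs.mul_prod hw.abs).const_mul c) (.of_forall hb)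

theorem abs_integral_mul_le_of_abs_le {α : Type*} [MeasurableSpace α] {μ : Measure α}
    {k w : α → ℝ} {c : ℝ} (hk : Integrable k μ) (hw : ∀ p, |w p| ≤ c) :
    |∫ p, k p * w p ∂μ| ≤ (∫ p, |k p| ∂μ) * c := by
  rw [← integral_mul_const]
  refine (abs_integral_le_integral_abs).trans <|
    integral_mono_of_nonneg (.of_forall fun _ => abs_nonneg _) (hk.abs.mul_const c)
      (.of_forall fun p => ?_)
  simp only [abs_mul]
  exact mul_le_mul_of_nonneg_left (hw p) (abs_nonneg _)

theorem integral_mul_integral_swap {α β : Type*} [MeasurableSpace α] [MeasurableSpace β]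
    {μ : Measure α} {ν : Measure β} [SFinite μ] [IsFiniteMeasure ν] {k : α → ℝ} {V : α → β → ℝ}
    {c : ℝ} (hk : Integrable k μ) (hV : AEStronglyMeasurable (uncurry V) (μ.prod ν))
    (hVb : ∀ᵐ u ∂ν, ∀ p, |V p u| ≤ c) :
    ∫ p, k p * ∫ u, V p u ∂ν ∂μ = ∫ u, ∫ p, k p * V p u ∂μ ∂ν := by
  simp_rw [← integral_const_mul]
  refine integral_integral_swap <|
    (hk.norm.mul_prod (integrable_const c)).mono' ((hk.aestronglyMeasurable.comp_fst).mul hV) ?_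
  filter_upwards [Measure.quasiMeasurePreserving_snd.ae hVb] with z hz
  show |k z.1 * V z.1 z.2| ≤ |k z.1| * c
  rw [abs_mul]
  exact mul_le_mul_of_nonneg_left (hz z.1) (abs_nonneg _)

theorem integral_mul_integral_mul_eq_integral_prod {α β : Type*} [MeasurableSpace α]
    [MeasurableSpace β] {μ : Measure α} {ν : Measure β} [SFinite μ] [SFinite ν]
    {v : α → ℝ} {w : β → ℝ} {ψ : α × β → ℝ} {c : ℝ} (hv : Integrable v μ) (hw : Integrable w ν)
    (hψ : AEStronglyMeasurable ψ (μ.prod ν)) (hψb : ∀ p, |ψ p| ≤ c) :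
    ∫ x, v x * ∫ y, w y * ψ (x, y) ∂ν ∂μ = ∫ p, v p.1 * w p.2 * ψ p ∂(μ.prod ν) := by
  have hint : Integrable (fun p : α × β => v p.1 * w p.2 * ψ p) (μ.prod ν) := by
    refine integrable_prod_of_abs_le_mul hv hw
      ((hv.aestronglyMeasurable.comp_fst.mul hw.aestronglyMeasurable.comp_snd).mul hψ)
      (c := c) fun p => ?_
    rw [abs_mul, abs_mul, mul_comm c]
    exact mul_le_mul_of_nonneg_left (hψb p) (by positivity)
  rw [integral_prod _ hint]
  simp_rw [← integral_const_mul, mul_assoc]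

theorem intervalIntegral_integral_swap_triangle {H : ℝ → ℝ → ℝ} {T : ℝ} (hT : 0 ≤ T)
    (hH : Measurable (uncurry H)) (hHb : ∃ c, ∀ s ∈ Icc 0 T, ∀ u ∈ Icc 0 T, |H s u| ≤ c) :
    ∫ s in 0..T, ∫ u in s..T, H s u = ∫ u in 0..T, ∫ s in 0..u, H s u := by
  obtain ⟨c, hc⟩ := hHb
  let G : ℝ → ℝ → ℝ := fun s u => (Ioi s).indicator (H s) u
  have hG : Integrable (uncurry G)
      ((volume.restrict (Ioc 0 T)).prod (volume.restrict (Ioc 0 T))) := by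
    refine Integrable.of_bound (C := c) ?_ ?_
    · exact (Measurable.ite (measurableSet_lt measurable_fst measurable_snd) hH
        measurable_const).aestronglyMeasurable
    · filter_upwards [Measure.quasiMeasurePreserving_fst.ae (ae_restrict_mem measurableSet_Ioc),
        Measure.quasiMeasurePreserving_snd.ae (ae_restrict_mem measurableSet_Ioc)] with z h₁ h₂
      simp only [uncurry, G, indicator_apply, mem_Ioi, Real.norm_eq_abs]
      split_ifs
      · exact hc _ (Ioc_subset_Icc_self h₁) _ (Ioc_subset_Icc_self h₂)
      · simpa using (abs_nonneg _).trans (hc 0 ⟨le_rfl, hT⟩ 0 ⟨le_rfl, hT⟩)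
  have inner_left : ∀ s ∈ Ioc 0 T, ∫ u in s..T, H s u = ∫ u in Ioc 0 T, G s u := fun s hs => by
    rw [setIntegral_indicator measurableSet_Ioi, Ioc_inter_Ioi, max_eq_right hs.1.le,
      intervalIntegral.integral_of_le hs.2]
  have inner_right : ∀ u ∈ Ioc 0 T, ∫ s in 0..u, H s u = ∫ s in Ioc 0 T, G s u := by
    intro u hu
    have hG_eq : ∀ s, G s u = (Iio u).indicator (H · u) s := fun s => by
      simp only [G, indicator_apply, mem_Ioi, mem_Iio]
    have hset : Ioc 0 T ∩ Iio u = Ioo 0 u := by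
      ext s
      simp only [mem_inter_iff, mem_Ioc, mem_Iio, mem_Ioo]
      grind
    rw [funext hG_eq, setIntegral_indicator measurableSet_Iio, hset,
      intervalIntegral.integral_of_le hu.1.le, integral_Ioc_eq_integral_Ioo]
  rw [intervalIntegral.integral_of_le hT, intervalIntegral.integral_of_le hT,
    setIntegral_congr_fun measurableSet_Ioc inner_left,
    setIntegral_congr_fun measurableSet_Ioc inner_right]
  exact integral_integral_swap hG

theorem integral_eq_two_mul_integral_Ioi_of_swap {F : ℝ × ℝ → ℝ} (hF : Integrable F)
    (hswap : ∀ x y, F (x, y) = F (y, x)) :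
    ∫ p, F p = 2 * ∫ r in Ioi 0, ∫ y, F (r + y, y) := by
  have hshear := measurePreserving_prod_add (volume : Measure ℝ) volume
  rw [Measure.volume_eq_prod] at hF ⊢
  have hFshear : Integrable (fun z : ℝ × ℝ => F (z.1, z.1 + z.2)) (volume.prod volume) :=
    hshear.integrable_comp_emb (MeasurableEquiv.shearAddRight ℝ).measurableEmbedding |>.2 hF
  have heven : ∀ r, ∫ y, F (y, y + r) = ∫ y, F (|r| + y, y) := by
    intro r
    rcases abs_choice r with h | h <;> rw [h]
    · congr 1 with y
      rw [hswap, add_comm r]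
    · rw [← integral_add_right_eq_self (fun y => F (-r + y, y)) r]
      congr 1 with y
      rw [add_comm y r, neg_add_cancel_left]
  calc ∫ p, F p ∂(volume.prod volume)
      = ∫ z, F (z.1, z.1 + z.2) ∂(volume.prod volume) :=
        (hshear.integral_comp (MeasurableEquiv.shearAddRight ℝ).measurableEmbedding F).symm
    _ = ∫ r, ∫ y, F (y, y + r) := integral_prod_symm _ hFshear
    _ = ∫ r, ∫ y, F (|r| + y, y) := by simp_rw [heven]
    _ = 2 * ∫ r in Ioi 0, ∫ y, F (r + y, y) := integral_comp_abs (f := fun r => ∫ y, F (r + y, y))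

theorem integral_Iic_eq_integral_mul_ite (f : ℝ → ℝ) (a : ℝ) :
    ∫ x in Iic a, f x = ∫ x, f x * if x ≤ a then 1 else 0 := by
  rw [← integral_indicator measurableSet_Iic]
  congr 1 with x
  by_cases h : x ≤ a <;> simp [h]

noncomputable def midpointDefect (φ : ℝ → ℝ) (p : ℝ × ℝ) : ℝ :=
  2 * φ ((p.1 + p.2) / 2) - φ p.1 - φ p.2

theorem abs_midpointDefect_le {φ : ℝ → ℝ} {c : ℝ} (hφ : ∀ x, |φ x| ≤ c) (p : ℝ × ℝ) :
    |midpointDefect φ p| ≤ 4 * c := by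
  have h₁ := abs_le.1 (hφ ((p.1 + p.2) / 2))
  have h₂ := abs_le.1 (hφ p.1)
  have h₃ := abs_le.1 (hφ p.2)
  rw [abs_le, midpointDefect]
  constructor <;> linarith

theorem midpointDefect_swap (φ : ℝ → ℝ) (x y : ℝ) :
    midpointDefect φ (x, y) = midpointDefect φ (y, x) := by
  simp only [midpointDefect, add_comm x y]
  ring

theorem midpointDefect_sub (φ ψ : ℝ → ℝ) (p : ℝ × ℝ) :
    midpointDefect (fun x => φ x - ψ x) p = midpointDefect φ p - midpointDefect ψ p := by
  simp only [midpointDefect]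
  ring

theorem midpointDefect_integral {β : Type*} [MeasurableSpace β] {ν : Measure β}
    {B : ℝ → β → ℝ} (hB : ∀ x, Integrable (B x) ν) (p : ℝ × ℝ) :
    midpointDefect (fun x => ∫ u, B x u ∂ν) p = ∫ u, midpointDefect (fun x => B x u) p ∂ν := by
  simp only [midpointDefect]
  rw [← integral_const_mul, ← integral_sub ((hB _).const_mul 2) (hB _)]
  exact (integral_sub (((hB _).const_mul 2).sub (hB _)) (hB _)).symm

noncomputable def collisionPairing (k : ℝ × ℝ → ℝ) (φ : ℝ → ℝ) : ℝ :=
  ∫ p, k p * midpointDefect φ p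

theorem integrable_mul_midpointDefect {k : ℝ × ℝ → ℝ} {φ : ℝ → ℝ} {c : ℝ} (hk : Integrable k)
    (hφ : Measurable φ) (hφb : ∀ x, |φ x| ≤ c) :
    Integrable fun p => k p * midpointDefect φ p :=
  hk.mul_bdd (c := 4 * c) (by unfold midpointDefect; fun_prop)
    (.of_forall (abs_midpointDefect_le hφb))

theorem abs_collisionPairing_le {k : ℝ × ℝ → ℝ} {φ : ℝ → ℝ} {c : ℝ} (hk : Integrable k)
    (hφb : ∀ x, |φ x| ≤ c) :
    |collisionPairing k φ| ≤ (∫ p, |k p|) * (4 * c) :=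
  abs_integral_mul_le_of_abs_le hk (abs_midpointDefect_le hφb)

theorem measurable_collisionPairing {ι : Type*} [MeasurableSpace ι] {k : ι → ℝ × ℝ → ℝ}
    {Φ : ℝ → ι → ℝ} (hk : Measurable (uncurry k)) (hΦ : Measurable (uncurry Φ)) :
    Measurable fun i => collisionPairing (k i) fun x => Φ x i := by
  have : Measurable fun q : ι × (ℝ × ℝ) => k q.1 q.2 * midpointDefect (fun x => Φ x q.1) q.2 := by
    unfold midpointDefect; fun_prop
  exact this.stronglyMeasurable.integral_prod_right'.measurable

theorem collisionPairing_sub {k : ℝ × ℝ → ℝ} {φ ψ : ℝ → ℝ} {c c' : ℝ} (hk : Integrable k)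
    (hφ : Measurable φ) (hφb : ∀ x, |φ x| ≤ c) (hψ : Measurable ψ) (hψb : ∀ x, |ψ x| ≤ c') :
    collisionPairing k (fun x => φ x - ψ x) = collisionPairing k φ - collisionPairing k ψ := by
  simp only [collisionPairing, midpointDefect_sub, mul_sub]
  exact integral_sub (integrable_mul_midpointDefect hk hφ hφb)
    (integrable_mul_midpointDefect hk hψ hψb)

theorem collisionPairing_const_mul_add {k₁ k₂ : ℝ × ℝ → ℝ} {φ : ℝ → ℝ} {c : ℝ} (a : ℝ)
    (hk₁ : Integrable k₁) (hk₂ : Integrable k₂) (hφ : Measurable φ) (hφb : ∀ x, |φ x| ≤ c) :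
    collisionPairing (fun p => a * k₁ p + k₂ p) φ
      = a * collisionPairing k₁ φ + collisionPairing k₂ φ := by
  simp only [collisionPairing, add_mul, mul_assoc]
  rw [integral_add ((integrable_mul_midpointDefect hk₁ hφ hφb).const_mul a)
    (integrable_mul_midpointDefect hk₂ hφ hφb), integral_const_mul]

theorem collisionPairing_intervalIntegral {k : ℝ × ℝ → ℝ} {B : ℝ → ℝ → ℝ} {s T c : ℝ}
    (hk : Integrable k) (hB : Measurable (uncurry B)) (hsT : s ≤ T)
    (hBb : ∀ x, ∀ u ∈ Ioc s T, |B x u| ≤ c) :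
    collisionPairing k (fun x => ∫ u in s..T, B x u)
      = ∫ u in s..T, collisionPairing k fun x => B x u := by
  have hBi : ∀ x, IntegrableOn (B x) (Ioc s T) := fun x =>
    Measure.integrableOn_of_bounded measure_Ioc_lt_top.ne
      (hB.comp measurable_prodMk_left).aestronglyMeasurable
      ((ae_restrict_iff' measurableSet_Ioc).2
        (.of_forall fun u hu => (Real.norm_eq_abs _).trans_le (hBb x u hu)))
  simp only [collisionPairing, intervalIntegral.integral_of_le hsT,
    midpointDefect_integral hBi]
  refine integral_mul_integral_swap hk (by unfold midpointDefect; fun_prop) (c := 4 * c) ?_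
  exact (ae_restrict_iff' measurableSet_Ioc).2 (.of_forall fun u hu p =>
    abs_midpointDefect_le (fun x => hBb x u hu) p)

structure IsUniformlyL1Bounded (k : ℝ → ℝ × ℝ → ℝ) (T : ℝ) : Prop where
  measurable : Measurable (uncurry k)
  integrable : ∀ s ∈ Icc 0 T, Integrable (k s)
  bounded : ∃ M, ∀ s ∈ Icc 0 T, ∫ p, |k s p| ≤ M

theorem IsUniformlyL1Bounded.const_mul_add {k₁ k₂ : ℝ → ℝ × ℝ → ℝ} {T : ℝ}
    (h₁ : IsUniformlyL1Bounded k₁ T) (h₂ : IsUniformlyL1Bounded k₂ T) (a : ℝ) :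
    IsUniformlyL1Bounded (fun s p => a * k₁ s p + k₂ s p) T where
  measurable := (h₁.measurable.const_mul a).add h₂.measurable
  integrable s hs := ((h₁.integrable s hs).const_mul a).add (h₂.integrable s hs)
  bounded := by
    obtain ⟨M₁, hM₁⟩ := h₁.bounded
    obtain ⟨M₂, hM₂⟩ := h₂.bounded
    refine ⟨|a| * M₁ + M₂, fun s hs => ?_⟩
    have hi₁ := (h₁.integrable s hs).abs
    have hi₂ := (h₂.integrable s hs).abs
    calc ∫ p, |a * k₁ s p + k₂ s p|
        ≤ ∫ p, (|a| * |k₁ s p| + |k₂ s p|) :=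
          integral_mono_of_nonneg (.of_forall fun _ => abs_nonneg _) ((hi₁.const_mul _).add hi₂)
            (.of_forall fun p => (abs_add_le _ _).trans_eq (by rw [abs_mul]))
      _ ≤ |a| * M₁ + M₂ := by
          rw [integral_add (hi₁.const_mul _) hi₂, integral_const_mul]
          exact add_le_add (mul_le_mul_of_nonneg_left (hM₁ s hs) (abs_nonneg a)) (hM₂ s hs)

theorem IsUniformlyL1Bounded.exists_abs_collisionPairing_le {k : ℝ → ℝ × ℝ → ℝ} {T : ℝ}
    (hk : IsUniformlyL1Bounded k T) {ι : Type*} {Φ : ℝ → ι → ℝ} {S : Set ι}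
    (hΦb : ∃ c, ∀ x, ∀ i ∈ S, |Φ x i| ≤ c) :
    ∃ C, ∀ s ∈ Icc 0 T, ∀ i ∈ S, |collisionPairing (k s) fun x => Φ x i| ≤ C := by
  obtain ⟨M, hM⟩ := hk.bounded
  obtain ⟨c, hc⟩ := hΦb
  refine ⟨M * (4 * c), fun s hs i hi => ?_⟩
  have hc₀ : 0 ≤ c := (abs_nonneg _).trans (hc 0 i hi)
  exact (abs_collisionPairing_le (hk.integrable s hs) fun x => hc x i hi).trans
    (by gcongr; exact hM s hs)

theorem IsUniformlyL1Bounded.intervalIntegrable_collisionPairing {k : ℝ → ℝ × ℝ → ℝ} {T : ℝ}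
    (hk : IsUniformlyL1Bounded k T) (hT : 0 ≤ T) {Φ : ℝ → ℝ → ℝ} (hΦ : Measurable (uncurry Φ))
    (hΦb : ∃ c, ∀ x, ∀ s ∈ Icc 0 T, |Φ x s| ≤ c) :
    IntervalIntegrable (fun s => collisionPairing (k s) fun x => Φ x s) volume 0 T := by
  obtain ⟨C, hC⟩ := hk.exists_abs_collisionPairing_le hΦb
  rw [intervalIntegrable_iff_integrableOn_Ioc_of_le hT]
  refine Measure.integrableOn_of_bounded (M := C) measure_Ioc_lt_top.ne
    (measurable_collisionPairing hk.measurable hΦ).aestronglyMeasurable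
    ((ae_restrict_iff' measurableSet_Ioc).2 (.of_forall fun s hs => ?_))
  exact (Real.norm_eq_abs _).trans_le (hC s (Ioc_subset_Icc_self hs) s (Ioc_subset_Icc_self hs))

theorem IsUniformlyL1Bounded.integral_collisionPairing_eq_sub {k : ℝ → ℝ × ℝ → ℝ} {T : ℝ}
    (hk : IsUniformlyL1Bounded k T) (hT : 0 ≤ T) {ψ : ℝ → ℝ} {Φ B : ℝ → ℝ → ℝ}
    (hψ : Measurable ψ) (hΦ : Measurable (uncurry Φ)) (hB : Measurable (uncurry B))
    (hψb : ∃ c, ∀ x, |ψ x| ≤ c) (hΦb : ∃ c, ∀ x, ∀ s ∈ Icc 0 T, |Φ x s| ≤ c)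
    (hBb : ∃ c, ∀ x, ∀ u ∈ Icc 0 T, |B x u| ≤ c)
    (hψΦ : ∀ x, ∀ s ∈ Icc 0 T, ψ x = Φ x s - ∫ u in s..T, B x u) :
    ∫ s in 0..T, collisionPairing (k s) ψ
      = (∫ s in 0..T, collisionPairing (k s) fun x => Φ x s)
        - ∫ u in 0..T, ∫ s in 0..u, collisionPairing (k s) fun x => B x u := by
  have ⟨cψ, hcψ⟩ := hψb
  have ⟨cΦ, hcΦ⟩ := hΦb
  have ⟨cB, hcB⟩ := hBb
  have hpoint : ∀ s ∈ Icc 0 T,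
      collisionPairing (k s) (fun x => Φ x s) - collisionPairing (k s) ψ
        = ∫ u in s..T, collisionPairing (k s) fun x => B x u := by
    intro s hs
    rw [← collisionPairing_intervalIntegral (hk.integrable s hs) hB hs.2
        fun x u hu => hcB x u ⟨hs.1.trans hu.1.le, hu.2⟩,
      ← collisionPairing_sub (φ := fun x => Φ x s) (hk.integrable s hs)
        (hΦ.comp measurable_prodMk_right) (fun x => hcΦ x s hs) hψ hcψ]
    congr 1 with x
    rw [hψΦ x s hs]
    ring
  have hH : Measurable (uncurry fun s u => collisionPairing (k s) fun x => B x u) :=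
    measurable_collisionPairing (k := fun z : ℝ × ℝ => k z.1) (Φ := fun x z => B x z.2)
      (hk.measurable.comp (measurable_fst.fst.prodMk measurable_snd))
      (hB.comp (measurable_fst.prodMk measurable_snd.snd))
  have hsub : ∫ s in 0..T, (collisionPairing (k s) (fun x => Φ x s) - collisionPairing (k s) ψ)
      = (∫ s in 0..T, collisionPairing (k s) fun x => Φ x s)
        - ∫ s in 0..T, collisionPairing (k s) ψ :=
    intervalIntegral.integral_sub (hk.intervalIntegrable_collisionPairing hT hΦ hΦb)
      (hk.intervalIntegrable_collisionPairing hT (Φ := fun x _ => ψ x) (hψ.comp measurable_fst)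
        ⟨cψ, fun x _ _ => hcψ x⟩)
  rw [← intervalIntegral_integral_swap_triangle hT hH (hk.exists_abs_collisionPairing_le hBb),
    ← intervalIntegral.integral_congr fun s hs => hpoint s (by rwa [uIcc_of_le hT] at hs), hsub]
  ring

noncomputable def interactionKernel (θ u v : ℝ → ℝ) (p : ℝ × ℝ) : ℝ :=
  u p.1 * v p.2 * θ (p.1 - p.2)

theorem abs_interactionKernel_le {θ u v : ℝ → ℝ} {K : ℝ} (hθb : ∀ r, |θ r| ≤ K) (p : ℝ × ℝ) :
    |interactionKernel θ u v p| ≤ K * (|u p.1| * |v p.2|) := by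
  rw [interactionKernel, abs_mul, abs_mul, mul_comm K]
  exact mul_le_mul_of_nonneg_left (hθb _) (by positivity)

theorem integrable_interactionKernel {θ u v : ℝ → ℝ} {K : ℝ} (hθ : Measurable θ)
    (hθb : ∀ r, |θ r| ≤ K) (hu : Integrable u) (hv : Integrable v) :
    Integrable (interactionKernel θ u v) := by
  rw [Measure.volume_eq_prod]
  refine integrable_prod_of_abs_le_mul hu hv ?_ (abs_interactionKernel_le hθb)
  exact (hu.aestronglyMeasurable.comp_fst.mul hv.aestronglyMeasurable.comp_snd).mul
    (hθ.comp (measurable_fst.sub measurable_snd)).aestronglyMeasurable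

theorem integral_abs_interactionKernel_le {θ u v : ℝ → ℝ} {K Cu Cv : ℝ} (hθb : ∀ r, |θ r| ≤ K)
    (hu : Integrable u) (hv : Integrable v) (hCu : ∫ x, |u x| ≤ Cu) (hCv : ∫ x, |v x| ≤ Cv) :
    ∫ p, |interactionKernel θ u v p| ≤ K * (Cu * Cv) := by
  have hK : 0 ≤ K := (abs_nonneg _).trans (hθb 0)
  rw [Measure.volume_eq_prod]
  refine (integral_abs_prod_le_mul hu hv (abs_interactionKernel_le hθb)).trans ?_
  gcongr
  exact (integral_nonneg fun _ => abs_nonneg _).trans hCu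

theorem isUniformlyL1Bounded_interactionKernel {θ : ℝ → ℝ} {u v : ℝ → ℝ → ℝ} {T C : ℝ}
    (hθ : Measurable θ) (hθb : ∃ K, ∀ r, |θ r| ≤ K) (hu : Measurable (uncurry u))
    (hv : Measurable (uncurry v))
    (huL1 : ∀ t ∈ Icc 0 T, Integrable (fun x => u x t) ∧ ∫ x, |u x t| ≤ C)
    (hvL1 : ∀ t ∈ Icc 0 T, Integrable (fun x => v x t) ∧ ∫ x, |v x t| ≤ C) :
    IsUniformlyL1Bounded (fun s => interactionKernel θ (fun x => u x s) fun x => v x s) T := by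
  obtain ⟨K, hK⟩ := hθb
  refine ⟨by unfold interactionKernel; fun_prop, fun s hs => ?_, ⟨K * (C * C), fun s hs => ?_⟩⟩
  · exact integrable_interactionKernel hθ hK (huL1 s hs).1 (hvL1 s hs).1
  · exact integral_abs_interactionKernel_le hK (huL1 s hs).1 (hvL1 s hs).1 (huL1 s hs).2
      (hvL1 s hs).2

theorem collisionPairing_interactionKernel_self {θ v φ : ℝ → ℝ} (hθe : ∀ r, θ (-r) = θ r)
    (hθ : Measurable θ) (hθb : ∃ K, ∀ r, |θ r| ≤ K) (hv : Integrable v) (hφ : Measurable φ)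
    (hφb : ∃ c, ∀ x, |φ x| ≤ c) :
    collisionPairing (interactionKernel θ v v) φ
      = ∫ r in Ioi 0, ∫ y, 2 * θ r * v (r + y) * v y * (2 * φ (y + r / 2) - φ (r + y) - φ y) := by
  obtain ⟨K, hK⟩ := hθb
  obtain ⟨c, hc⟩ := hφb
  have hswap : ∀ x y, interactionKernel θ v v (x, y) * midpointDefect φ (x, y)
      = interactionKernel θ v v (y, x) * midpointDefect φ (y, x) := by
    intro x y
    simp only [interactionKernel]
    rw [midpointDefect_swap φ x y, ← hθe (x - y), neg_sub]
    ring
  rw [collisionPairing, integral_eq_two_mul_integral_Ioi_of_swap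
    (integrable_mul_midpointDefect (integrable_interactionKernel hθ hK hv hv) hφ hc) hswap,
    ← integral_const_mul]
  congr 1 with r
  rw [← integral_const_mul]
  congr 1 with y
  simp only [interactionKernel, midpointDefect, add_sub_cancel_right,
    show (r + y + y) / 2 = y + r / 2 by ring]
  ring

/-- The adjoint operator `𝓛*_θ[g](x, s)` of the paper is `adjointCollision θ (f · s) (g · s) x`. -/
noncomputable def adjointCollision (θ v φ : ℝ → ℝ) (x : ℝ) : ℝ :=
  ∫ y, 2 * v y * θ (x - y) * midpointDefect φ (x, y)

theorem adjointCollision_eq_integral_mul (θ v φ : ℝ → ℝ) (x : ℝ) :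
    adjointCollision θ v φ x = ∫ y, v y * (2 * θ (x - y) * midpointDefect φ (x, y)) := by
  unfold adjointCollision
  congr 1 with y
  ring

theorem abs_two_mul_mul_midpointDefect_le {θ φ : ℝ → ℝ} {K c : ℝ} (hθb : ∀ r, |θ r| ≤ K)
    (hφb : ∀ x, |φ x| ≤ c) (p : ℝ × ℝ) :
    |2 * θ (p.1 - p.2) * midpointDefect φ p| ≤ 2 * K * (4 * c) := by
  have hK : 0 ≤ K := (abs_nonneg _).trans (hθb 0)
  rw [abs_mul, abs_mul, abs_two]
  gcongr
  exacts [hθb _, abs_midpointDefect_le hφb p]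

theorem abs_adjointCollision_le {θ v φ : ℝ → ℝ} {K c : ℝ} (hv : Integrable v)
    (hθb : ∀ r, |θ r| ≤ K) (hφb : ∀ x, |φ x| ≤ c) (x : ℝ) :
    |adjointCollision θ v φ x| ≤ (∫ y, |v y|) * (2 * K * (4 * c)) := by
  rw [adjointCollision_eq_integral_mul]
  exact abs_integral_mul_le_of_abs_le hv fun y => abs_two_mul_mul_midpointDefect_le hθb hφb (x, y)

theorem measurable_adjointCollision {ι : Type*} [MeasurableSpace ι] {θ : ℝ → ℝ}
    {v φ : ℝ → ι → ℝ} (hθ : Measurable θ) (hv : Measurable (uncurry v))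
    (hφ : Measurable (uncurry φ)) :
    Measurable (uncurry fun x i => adjointCollision θ (fun y => v y i) (fun y => φ y i) x) := by
  have : Measurable fun q : (ℝ × ι) × ℝ =>
      2 * v q.2 q.1.2 * θ (q.1.1 - q.2) * midpointDefect (fun y => φ y q.1.2) (q.1.1, q.2) := by
    unfold midpointDefect; fun_prop
  exact this.stronglyMeasurable.integral_prod_right'.measurable

theorem integral_mul_adjointCollision {θ u v φ : ℝ → ℝ} {K c : ℝ} (hθ : Measurable θ)
    (hθb : ∀ r, |θ r| ≤ K) (hu : Integrable u) (hv : Integrable v) (hφ : Measurable φ)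
    (hφb : ∀ x, |φ x| ≤ c) :
    ∫ x, u x * adjointCollision θ v φ x = 2 * collisionPairing (interactionKernel θ u v) φ := by
  simp_rw [adjointCollision_eq_integral_mul]
  rw [integral_mul_integral_mul_eq_integral_prod hu hv (by unfold midpointDefect; fun_prop)
    (abs_two_mul_mul_midpointDefect_le hθb hφb), ← Measure.volume_eq_prod, collisionPairing,
    ← integral_const_mul]
  congr 1 with p
  simp only [interactionKernel]
  ring

theorem exists_abs_adjointCollision_le {θ : ℝ → ℝ} {f g : ℝ → ℝ → ℝ} {T C : ℝ}
    (hθb : ∃ K, ∀ r, |θ r| ≤ K)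
    (hfL1 : ∀ t ∈ Icc 0 T, Integrable (fun x => f x t) ∧ ∫ x, |f x t| ≤ C)
    (hgb : ∃ K, ∀ x t, |g x t| ≤ K) :
    ∃ c, ∀ x, ∀ u ∈ Icc 0 T, |adjointCollision θ (fun y => f y u) (fun y => g y u) x| ≤ c := by
  obtain ⟨Kθ, hKθ⟩ := hθb
  obtain ⟨Kg, hKg⟩ := hgb
  have : 0 ≤ Kθ := (abs_nonneg _).trans (hKθ 0)
  have : 0 ≤ Kg := (abs_nonneg _).trans (hKg 0 0)
  refine ⟨C * (2 * Kθ * (4 * Kg)), fun x u hu => ?_⟩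
  refine (abs_adjointCollision_le (hfL1 u hu).1 hKθ (fun y => hKg y u) x).trans ?_
  gcongr
  exact (hfL1 u hu).2

/-- The kernel of `𝓛_θ[f̃] + 𝓢_θ[θ̃]` in the weak form (H1). -/
noncomputable def linearizedCollisionKernel (θ θt : ℝ → ℝ) (f ft : ℝ → ℝ → ℝ) (s : ℝ) :
    ℝ × ℝ → ℝ := fun p =>
  2 * interactionKernel θ (fun x => ft x s) (fun x => f x s) p
    + interactionKernel θt (fun x => f x s) (fun x => f x s) p

theorem integral_mul_eq_integral_collisionPairing_of_adjoint {T C : ℝ} (hT : 0 ≤ T)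
    {θ θt ψ : ℝ → ℝ} {f ft g : ℝ → ℝ → ℝ} (hθ : Measurable θ) (hθb : ∃ K, ∀ r, |θ r| ≤ K)
    (hθt : Measurable θt) (hθtb : ∃ K, ∀ r, |θt r| ≤ K) (hf : Measurable (uncurry f))
    (hft : Measurable (uncurry ft)) (hg : Measurable (uncurry g)) (hψ : Measurable ψ)
    (hfL1 : ∀ t ∈ Icc 0 T, Integrable (fun x => f x t) ∧ ∫ x, |f x t| ≤ C)
    (hftL1 : ∀ t ∈ Icc 0 T, Integrable (fun x => ft x t) ∧ ∫ x, |ft x t| ≤ C)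
    (hgb : ∃ K, ∀ x t, |g x t| ≤ K) (hψb : ∃ K, ∀ x, |ψ x| ≤ K)
    (hforward : ∀ φ, Measurable φ → (∃ K, ∀ x, |φ x| ≤ K) → ∀ t ∈ Icc 0 T,
      ∫ x, ft x t * φ x = ∫ s in 0..t, collisionPairing (linearizedCollisionKernel θ θt f ft s) φ)
    (hbackward : ∀ x, ∀ s ∈ Icc 0 T,
      g x s = ψ x + ∫ u in s..T, adjointCollision θ (fun y => f y u) (fun y => g y u) x) :
    ∫ x, ft x T * ψ x
      = ∫ s in 0..T, collisionPairing (interactionKernel θt (fun x => f x s) fun x => f x s)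
          fun x => g x s := by
  have hkθ := isUniformlyL1Bounded_interactionKernel hθ hθb hft hf hftL1 hfL1
  have hkθt := isUniformlyL1Bounded_interactionKernel hθt hθtb hf hf hfL1 hfL1
  have hk : IsUniformlyL1Bounded (linearizedCollisionKernel θ θt f ft) T :=
    hkθ.const_mul_add hkθt 2
  have ⟨Kθ, hKθ⟩ := hθb
  have ⟨Kg, hKg⟩ := hgb
  have hgb' : ∃ K, ∀ x, ∀ s ∈ Icc 0 T, |g x s| ≤ K := ⟨Kg, fun x s _ => hKg x s⟩
  have ⟨cB, hBb⟩ := exists_abs_adjointCollision_le hθb hfL1 hgb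
  have hB := measurable_adjointCollision (v := f) (φ := g) hθ hf hg
  have hgs : ∀ s, Measurable fun x => g x s := fun s => hg.comp measurable_prodMk_right
  have mem_Icc : ∀ s ∈ uIcc 0 T, s ∈ Icc 0 T := fun s hs => by rwa [uIcc_of_le hT] at hs
  rw [hforward ψ hψ hψb T ⟨hT, le_rfl⟩,
    hk.integral_collisionPairing_eq_sub hT hψ hg hB hψb hgb' ⟨cB, hBb⟩
      fun x s hs => by linarith [hbackward x s hs]]
  have hadjoint : ∀ u ∈ uIcc 0 T,
      (∫ s in 0..u, collisionPairing (linearizedCollisionKernel θ θt f ft s)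
        fun x => adjointCollision θ (fun y => f y u) (fun y => g y u) x)
      = 2 * collisionPairing (interactionKernel θ (fun x => ft x u) fun x => f x u)
          fun x => g x u := fun u hu => by
    have hu := mem_Icc u hu
    rw [← hforward (fun x => adjointCollision θ (fun y => f y u) (fun y => g y u) x)
      (hB.comp measurable_prodMk_right) ⟨cB, fun x => hBb x u hu⟩ u hu]
    exact integral_mul_adjointCollision hθ hKθ (hftL1 u hu).1 (hfL1 u hu).1 (hgs u)
      fun x => hKg x u
  rw [intervalIntegral.integral_congr hadjoint, ← intervalIntegral.integral_sub
    (hk.intervalIntegrable_collisionPairing hT hg hgb')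
    ((hkθ.intervalIntegrable_collisionPairing hT hg hgb').const_mul 2)]
  refine intervalIntegral.integral_congr fun s hs => ?_
  have hs := mem_Icc s hs
  unfold linearizedCollisionKernel
  rw [collisionPairing_const_mul_add 2 (hkθ.integrable s hs) (hkθt.integrable s hs) (hgs s)
    fun x => hKg x s]
  ring

theorem stmt13_general (T a C : ℝ) (hT : 0 < T)
    (θ θt : ℝ → ℝ)
    (hθm : Measurable θ) (hθb : ∃ K, ∀ r, |θ r| ≤ K)
    (hθtm : Measurable θt) (hθtb : ∃ K, ∀ r, |θt r| ≤ K)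
    (hθte : ∀ r, θt (-r) = θt r)
    (f ft : ℝ → ℝ → ℝ)
    (hfm : Measurable (Function.uncurry f)) (hftm : Measurable (Function.uncurry ft))
    (hfL1 : ∀ t ∈ Set.Icc (0:ℝ) T,
      Integrable (fun x => f x t) ∧ (∫ x : ℝ, |f x t|) ≤ C)
    (hftL1 : ∀ t ∈ Set.Icc (0:ℝ) T,
      Integrable (fun x => ft x t) ∧ (∫ x : ℝ, |ft x t|) ≤ C)
    (g : ℝ → ℝ → ℝ)
    (hgm : Measurable (Function.uncurry g)) (hgb : ∃ K, ∀ x t, |g x t| ≤ K)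
    -- (H1): integrated weak form of the perturbed equation, tested against
    -- bounded measurable φ.
    (H1 : ∀ φ : ℝ → ℝ, Measurable φ → (∃ K, ∀ x, |φ x| ≤ K) →
      ∀ t ∈ Set.Icc (0:ℝ) T,
        (∫ x : ℝ, ft x t * φ x)
          = ∫ s in (0:ℝ)..t, ∫ p : ℝ × ℝ,
              (2 * ft p.1 s * f p.2 s * θ (p.1 - p.2)
                + f p.1 s * f p.2 s * θt (p.1 - p.2))
                * (2 * φ ((p.1 + p.2) / 2) - φ p.1 - φ p.2))
    -- (H2): integrated form of the adjoint problem with final condition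
    -- `g(·,T) = 𝟙_{(-∞,a]}`.
    (H2 : ∀ x : ℝ, ∀ t ∈ Set.Icc (0:ℝ) T,
      g x t = (if x ≤ a then (1:ℝ) else 0)
        + ∫ s in t..T, ∫ y : ℝ,
            2 * f y s * θ (x - y) * (2 * g ((x + y) / 2) s - g x s - g y s)) :
    (∫ x in Set.Iic a, ft x T)
      = ∫ s in (0:ℝ)..T, ∫ r in Set.Ioi (0:ℝ), ∫ y : ℝ,
          2 * θt r * f (r + y) s * f y s
            * (2 * g (y + r / 2) s - g (r + y) s - g y s) := by
  have hforward : ∀ φ, Measurable φ → (∃ K, ∀ x, |φ x| ≤ K) → ∀ t ∈ Icc 0 T,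
      ∫ x, ft x t * φ x
        = ∫ s in 0..t, collisionPairing (linearizedCollisionKernel θ θt f ft s) φ := by
    intro φ hφ hφb t ht
    rw [H1 φ hφ hφb t ht]
    congr 1 with s
    congr 1 with p
    simp only [linearizedCollisionKernel, interactionKernel, midpointDefect]
    ring
  rw [integral_Iic_eq_integral_mul_ite,
    integral_mul_eq_integral_collisionPairing_of_adjoint hT.le hθm hθb hθtm hθtb hfm hftm hgm
      (Measurable.ite measurableSet_Iic measurable_const measurable_const) hfL1 hftL1 hgb
      ⟨1, fun x => by split_ifs <;> simp⟩ hforward H2]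
  refine intervalIntegral.integral_congr fun s hs => ?_
  rw [uIcc_of_le hT.le] at hs
  obtain ⟨Kg, hKg⟩ := hgb
  exact collisionPairing_interactionKernel_self hθte hθtm hθtb (hfL1 s hs).1
    (hgm.comp measurable_prodMk_right) ⟨Kg, fun x => hKg x s⟩

theorem stmt13 (T a C : ℝ) (hT : 0 < T) (hC : 0 < C)
    (θ θt : ℝ → ℝ)
    (hθm : Measurable θ) (hθb : ∃ K, ∀ r, |θ r| ≤ K)
    (hθtm : Measurable θt) (hθtb : ∃ K, ∀ r, |θt r| ≤ K)
    (hθe : ∀ r, θ (-r) = θ r) (hθte : ∀ r, θt (-r) = θt r)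
    (f ft : ℝ → ℝ → ℝ)
    (hfm : Measurable (Function.uncurry f)) (hftm : Measurable (Function.uncurry ft))
    (hfnn : ∀ x t, 0 ≤ f x t)
    (hfL1 : ∀ t ∈ Set.Icc (0:ℝ) T,
      Integrable (fun x => f x t) ∧ (∫ x : ℝ, |f x t|) ≤ C)
    (hftL1 : ∀ t ∈ Set.Icc (0:ℝ) T,
      Integrable (fun x => ft x t) ∧ (∫ x : ℝ, |ft x t|) ≤ C)
    (g : ℝ → ℝ → ℝ)
    (hgm : Measurable (Function.uncurry g)) (hgb : ∃ K, ∀ x t, |g x t| ≤ K)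
    -- (H1): integrated weak form of the perturbed equation, tested against
    -- bounded measurable φ.
    (H1 : ∀ φ : ℝ → ℝ, Measurable φ → (∃ K, ∀ x, |φ x| ≤ K) →
      ∀ t ∈ Set.Icc (0:ℝ) T,
        (∫ x : ℝ, ft x t * φ x)
          = ∫ s in (0:ℝ)..t, ∫ p : ℝ × ℝ,
              (2 * ft p.1 s * f p.2 s * θ (p.1 - p.2)
                + f p.1 s * f p.2 s * θt (p.1 - p.2))
                * (2 * φ ((p.1 + p.2) / 2) - φ p.1 - φ p.2))
    -- (H2): integrated form of the adjoint problem with final condition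
    -- `g(·,T) = 𝟙_{(-∞,a]}`.
    (H2 : ∀ x : ℝ, ∀ t ∈ Set.Icc (0:ℝ) T,
      g x t = (if x ≤ a then (1:ℝ) else 0)
        + ∫ s in t..T, ∫ y : ℝ,
            2 * f y s * θ (x - y) * (2 * g ((x + y) / 2) s - g x s - g y s)) :
    (∫ x in Set.Iic a, ft x T)
      = ∫ s in (0:ℝ)..T, ∫ r in Set.Ioi (0:ℝ), ∫ y : ℝ,
          2 * θt r * f (r + y) s * f y s
            * (2 * g (y + r / 2) s - g (r + y) s - g y s) :=
  stmt13_general T a C hT θ θt hθm hθb hθtm hθtb hθte f ft hfm hftm hfL1 hftL1 g hgm hgb H1 H2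
end
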